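/- Define f(x,y) = sqrt((x+y−2)/(x+y)) − sqrt((x+y−2)/(x·y)) for real x, y with 1 ≤ x ≤ y and y ≥ 2. Then f is nondecreasing in each variable on this domain. -/
import Mathlib


noncomputable def f (x y : ℝ) : ℝ :=
  Real.sqrt ((x + y - 2) / (x + y)) - Real.sqrt ((x + y - 2) / (x * y))

open Real Set

private lemma key0 (a b : ℝ) (ha : 0 ≤ a) (ha1 : a ≤ 1) (hb : 0 ≤ b) :
    (2 - (1+a))^2 * ((1+a) + (2+b))^3 ≤ 4 * (1+a) * (2+b)^3 := by
  have c0 : 0 ≤ 1 - a := by linarith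
  have c1 : 0 ≤ a * (1-a) := mul_nonneg ha c0
  have c2 : 0 ≤ a * a * (1-a) := mul_nonneg (mul_nonneg ha ha) c0
  have c3 : 0 ≤ a * a * a * (1-a) := mul_nonneg (mul_nonneg (mul_nonneg ha ha) ha) c0
  have c4 : 0 ≤ a * a * a * a * (1-a) :=
    mul_nonneg (mul_nonneg (mul_nonneg (mul_nonneg ha ha) ha) ha) c0
  have g2 : a^3 ≤ a := by nlinarith
  have g3 : a^4 ≤ a := by nlinarith
  have g4 : a^5 ≤ a := by nlinarith
  have f1 : a^2*b^2 ≤ a*b^2 := mul_le_mul_of_nonneg_right (by nlinarith) (sq_nonneg b)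
  have f2 : a^2*b^3 ≤ a*b^3 := mul_le_mul_of_nonneg_right (by nlinarith) (pow_nonneg hb 3)
  have f3 : a^3*b ≤ a*b := mul_le_mul_of_nonneg_right g2 hb
  have f4 : a^3*b^2 ≤ a*b^2 := mul_le_mul_of_nonneg_right g2 (sq_nonneg b)
  have f5 : a^4*b ≤ a*b := mul_le_mul_of_nonneg_right g3 hb
  linarith [g2, g3, g4, f1, f2, f3, f4, f5, mul_nonneg ha hb,
    sq_nonneg a, sq_nonneg b, pow_nonneg hb 3, mul_nonneg (sq_nonneg a) hb,
    mul_nonneg ha (sq_nonneg b), mul_nonneg ha (pow_nonneg hb 3)]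

private lemma keyineq (x y : ℝ) (h1 : 1 ≤ x) (h2 : x ≤ 2) (h3 : 2 ≤ y) :
    (2 - x)^2 * (x + y)^3 ≤ 4 * x * y^3 := by
  have h := key0 (x-1) (y-2) (by linarith) (by linarith) (by linarith)
  have e1 : (1 + (x-1)) = x := by ring
  have e2 : (2 + (y-2)) = y := by ring
  rw [e1, e2] at h
  linarith

private lemma hasDeriv (x y : ℝ) (hx : 0 < x) (hy : 0 < y) (hs2 : 0 < x + y - 2) :
    HasDerivAt (fun y => f x y)
      (1 / (2 * Real.sqrt ((x + y - 2) / (x + y))) * ((1 * (x + y) - (x + y - 2) * 1) / (x + y) ^ 2)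
       - 1 / (2 * Real.sqrt ((x + y - 2) / (x * y))) * ((1 * (x * y) - (x + y - 2) * x) / (x * y) ^ 2)) y := by
  have hs : 0 < x + y := by linarith
  have hm : 0 < x * y := mul_pos hx hy
  have h1 : HasDerivAt (fun y : ℝ => x + y - 2) 1 y := by
    simpa using ((hasDerivAt_id y).const_add x).sub_const 2
  have h2 : HasDerivAt (fun y : ℝ => x + y) 1 y := by
    simpa using (hasDerivAt_id y).const_add x
  have h5 : HasDerivAt (fun y : ℝ => x * y) x y := by
    simpa using (hasDerivAt_id y).const_mul x
  have hu : HasDerivAt (fun y : ℝ => (x + y - 2) / (x + y))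
      (((1 : ℝ) * (x + y) - (x + y - 2) * 1) / (x + y) ^ 2) y := h1.div h2 hs.ne'
  have hv : HasDerivAt (fun y : ℝ => (x + y - 2) / (x * y))
      (((1 : ℝ) * (x * y) - (x + y - 2) * x) / (x * y) ^ 2) y := h1.div h5 hm.ne'
  have hu0 : (x + y - 2) / (x + y) ≠ 0 := ne_of_gt (div_pos hs2 hs)
  have hv0 : (x + y - 2) / (x * y) ≠ 0 := ne_of_gt (div_pos hs2 hm)
  have su := (Real.hasDerivAt_sqrt hu0).comp y hu
  have sv := (Real.hasDerivAt_sqrt hv0).comp y hv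
  exact su.sub sv

private lemma mono_y (x : ℝ) (hx : 1 ≤ x) : MonotoneOn (fun y => f x y) (Ici (max x 2)) := by
  have hx0 : (0:ℝ) < x := by linarith
  apply monotoneOn_of_deriv_nonneg (convex_Ici _)
  · -- continuity
    have c1 : ContinuousOn (fun y : ℝ => (x + y - 2) / (x + y)) (Ici (max x 2)) := by
      apply ContinuousOn.div (by fun_prop) (by fun_prop)
      intro y hy
      have h2 : (2:ℝ) ≤ y := le_trans (le_max_right x 2) hy
      have : (0:ℝ) < x + y := by linarith
      exact this.ne'
    have c2 : ContinuousOn (fun y : ℝ => (x + y - 2) / (x * y)) (Ici (max x 2)) := by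
      apply ContinuousOn.div (by fun_prop) (by fun_prop)
      intro y hy
      have h2 : (2:ℝ) ≤ y := le_trans (le_max_right x 2) hy
      have : (0:ℝ) < x * y := by positivity
      exact this.ne'
    unfold f
    exact (Real.continuous_sqrt.comp_continuousOn c1).sub
      (Real.continuous_sqrt.comp_continuousOn c2)
  · rw [interior_Ici]
    intro y hy
    have hy2 : (2:ℝ) < y := lt_of_le_of_lt (le_max_right x 2) hy
    exact (hasDeriv x y hx0 (by linarith) (by linarith)).differentiableAt.differentiableWithinAt
  · rw [interior_Ici]
    intro y hy
    have hy2 : (2:ℝ) < y := lt_of_le_of_lt (le_max_right x 2) hy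
    have hy0 : (0:ℝ) < y := by linarith
    rw [(hasDeriv x y hx0 hy0 (by linarith)).deriv]
    have hs : 0 < x + y := by linarith
    have hm : 0 < x * y := mul_pos hx0 hy0
    have hs2 : 0 < x + y - 2 := by linarith
    have hu : 0 < (x + y - 2) / (x + y) := div_pos hs2 hs
    have hv : 0 < (x + y - 2) / (x * y) := div_pos hs2 hm
    have hsu : 0 < Real.sqrt ((x + y - 2) / (x + y)) := Real.sqrt_pos.2 hu
    have hsv : 0 < Real.sqrt ((x + y - 2) / (x * y)) := Real.sqrt_pos.2 hv
    set su := Real.sqrt ((x + y - 2) / (x + y)) with hsu_def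
    set sv := Real.sqrt ((x + y - 2) / (x * y)) with hsv_def
    have hsu2 : su ^ 2 = (x + y - 2) / (x + y) := Real.sq_sqrt hu.le
    have hsv2 : sv ^ 2 = (x + y - 2) / (x * y) := Real.sq_sqrt hv.le
    have e1 : (1 * (x + y) - (x + y - 2) * 1) = 2 := by ring
    have e2 : (1 * (x * y) - (x + y - 2) * x) = x * (2 - x) := by ring
    rw [e1, e2]
    rcases le_or_gt 2 x with hx2 | hx2
    · -- x ≥ 2 : second term nonpositive, first nonnegative
      have ht1 : 0 ≤ 1 / (2 * su) * (2 / (x + y) ^ 2) := by positivity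
      have ht2 : 1 / (2 * sv) * (x * (2 - x) / (x * y) ^ 2) ≤ 0 := by
        apply mul_nonpos_of_nonneg_of_nonpos (by positivity)
        apply div_nonpos_of_nonpos_of_nonneg _ (sq_nonneg _)
        nlinarith
      linarith
    · -- 1 ≤ x < 2
      rw [sub_nonneg]
      have r1 : 1 / (2 * sv) * (x * (2 - x) / (x * y) ^ 2)
          = x * (2 - x) / (2 * sv * (x * y) ^ 2) := by
        field_simp
      have r2 : 1 / (2 * su) * (2 / (x + y) ^ 2) = 2 / (2 * su * (x + y) ^ 2) := by
        field_simp
      rw [r1, r2, div_le_div_iff₀ (by positivity) (by positivity)]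
      -- goal : x*(2-x) * (2*su*(x+y)^2) ≤ 2 * (2*sv*(x*y)^2)
      have hL : 0 ≤ x * (2 - x) * (2 * su * (x + y) ^ 2) := by
        have : 0 ≤ x * (2 - x) := by nlinarith
        positivity
      have hR : 0 ≤ 2 * (2 * sv * (x * y) ^ 2) := by positivity
      have hsq : (x * (2 - x) * (2 * su * (x + y) ^ 2)) ^ 2 ≤ (2 * (2 * sv * (x * y) ^ 2)) ^ 2 := by
        have eL : (x * (2 - x) * (2 * su * (x + y) ^ 2)) ^ 2
            = 4 * x^2 * (2 - x)^2 * (x + y)^4 * ((x + y - 2) / (x + y)) := by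
          rw [← hsu2]; ring
        have eR : (2 * (2 * sv * (x * y) ^ 2)) ^ 2
            = 16 * (x * y)^4 * ((x + y - 2) / (x * y)) := by
          rw [← hsv2]; ring
        rw [eL, eR, ← mul_div_assoc, ← mul_div_assoc, div_le_div_iff₀ hs hm]
        have key := keyineq x y hx hx2.le hy2.le
        nlinarith [mul_le_mul_of_nonneg_right key
          (show (0:ℝ) ≤ x^3 * y * (x + y - 2) * (x + y) by positivity)]
      have := Real.sqrt_le_sqrt hsq
      rwa [Real.sqrt_sq hL, Real.sqrt_sq hR] at this

theorem f_monotone :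
    (∀ x₁ x₂ y : ℝ, 1 ≤ x₁ → x₁ ≤ x₂ → x₂ ≤ y → 2 ≤ y → f x₁ y ≤ f x₂ y) ∧
    (∀ x y₁ y₂ : ℝ, 1 ≤ x → x ≤ y₁ → y₁ ≤ y₂ → 2 ≤ y₁ → f x y₁ ≤ f x y₂) := by
  constructor
  · intro x₁ x₂ y h1 h12 h2y hy2
    unfold f
    have hx1 : (0:ℝ) < x₁ := by linarith
    have hx2 : (0:ℝ) < x₂ := by linarith
    have hy0 : (0:ℝ) < y := by linarith
    have hA : (x₁ + y - 2) / (x₁ + y) ≤ (x₂ + y - 2) / (x₂ + y) := by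
      rw [div_le_div_iff₀ (by linarith) (by linarith)]
      nlinarith
    have hB : (x₂ + y - 2) / (x₂ * y) ≤ (x₁ + y - 2) / (x₁ * y) := by
      rw [div_le_div_iff₀ (by positivity) (by positivity)]
      nlinarith [mul_nonneg (mul_nonneg hy0.le (by linarith : (0:ℝ) ≤ y - 2)) (by linarith : (0:ℝ) ≤ x₂ - x₁)]
    exact sub_le_sub (Real.sqrt_le_sqrt hA) (Real.sqrt_le_sqrt hB)
  · intro x y₁ y₂ hx hxy1 h12 hy1
    exact mono_y x hx (mem_Ici.2 (max_le hxy1 hy1))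
      (mem_Ici.2 (max_le (hxy1.trans h12) (hy1.trans h12))) h12
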